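/- arXiv:math/0107094 — 3 statements merged into one kernel-verified Lean document; each statement's English description precedes it below -/
import Mathlib

section
/- Let 𝒫 be a finite set of primes and let G = ⋂_{p ∈ 𝒫} G_p, where G_p = {A ∈ GL₃(ℤ) : A ≡ I (mod p)} is the principal congruence subgroup of level p in GL₃(ℤ). Then G is a residually finite p-group for every p ∈ 𝒫, and G is not right orderable. -/
/-!
Reducing modulo `p ^ (m + 1)` sends every element of `Γ(p)` to a matrix `1 + p C`, whose
`p ^ m`-th power is `1`; and a nontrivial `g` survives the reduction as soon as `p ^ (m + 1)` fails
to divide some entry of `g - 1`. This makes `G ≤ Γ(p)` a residually finite `p`-group.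

For `t = ∏ p`, the six elementary matrices `e_il(t)` lie in `G`, and `e_il(t)` commutes with
`e_ij(t)` and `e_jl(t)` and is a nonzero power of their commutator. In a right-ordered group such
a Heisenberg triple satisfies `|z| < max |a| |b|`: otherwise `a ^ k * b ^ k` and
`a⁻¹ ^ k * b⁻¹ ^ k` are both at most `|z| ^ (2k)`, while their product is
`⁅a ^ k, b ^ k⁆ = z ^ (c k²)`. The elementary matrix of largest absolute value contradicts this.
-/

/-- A group `G` is a residually finite `p`-group if for every `g ≠ 1` there is a
normal subgroup `N` of `G` with `g ∉ N` such that `G/N` is a finite `p`-group. -/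
def IsResiduallyFinitePGroup (p : ℕ) (G : Type*) [Group G] : Prop :=
  ∀ g : G, g ≠ 1 → ∃ (N : Subgroup G) (hN : N.Normal), g ∉ N ∧
    (letI := hN; Finite (G ⧸ N) ∧ IsPGroup p (G ⧸ N))

/-- A group `G` is right orderable if it admits a total order `≤` such that
`x ≤ y → x * g ≤ y * g` for all `g, x, y ∈ G`. -/
def IsRightOrderable (G : Type*) [Group G] : Prop :=
  ∃ r : LinearOrder G, ∀ g x y : G, r.le x y → r.le (x * g) (y * g)

/-- The principal congruence subgroup of level `p` in `GL₃(ℤ)`: the matrices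
congruent to the identity modulo `p`, i.e. the kernel of the reduction map
`GL₃(ℤ) →* GL₃(ℤ/p)`. -/
def congruenceSubgroup (p : ℕ) : Subgroup (Matrix.GeneralLinearGroup (Fin 3) ℤ) :=
  (Matrix.GeneralLinearGroup.map (n := Fin 3) (Int.castRingHom (ZMod p))).ker

open scoped commutatorElement

section Commutator

variable {G : Type*} [Group G] {a b : G}

theorem commutatorElement_pow_left (hw : Commute ⁅a, b⁆ a) (m : ℕ) :
    ⁅a ^ m, b⁆ = ⁅a, b⁆ ^ m := by
  induction m with
  | zero => simp
  | succ m ih =>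
    rw [pow_succ', commutatorElement_mul_left_eq_conj_mul, ih,
      (hw.pow_left m).eq.symm, mul_inv_cancel_right, pow_succ]

theorem commutatorElement_pow_right (hw : Commute ⁅a, b⁆ b) (n : ℕ) :
    ⁅a, b ^ n⁆ = ⁅a, b⁆ ^ n := by
  have hw' : Commute ⁅b, a⁆ b := by rw [← commutatorElement_inv]; exact hw.inv_left
  rw [← commutatorElement_inv, commutatorElement_pow_left hw', ← commutatorElement_inv, inv_pow,
    inv_inv]

theorem commutatorElement_pow_pow (ha : Commute ⁅a, b⁆ a) (hb : Commute ⁅a, b⁆ b) (m n : ℕ) :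
    ⁅a ^ m, b ^ n⁆ = ⁅a, b⁆ ^ (m * n) := by
  have ha' : Commute ⁅a, b ^ n⁆ a := by rw [commutatorElement_pow_right hb]; exact ha.pow_left n
  rw [commutatorElement_pow_left ha', commutatorElement_pow_right hb, ← pow_mul, mul_comm]

end Commutator

theorem isPGroup_quotient_ker {G K : Type*} [Group G] [Group K] {p : ℕ} (φ : G →* K)
    (h : ∀ g, ∃ k : ℕ, φ g ^ p ^ k = 1) : IsPGroup p (G ⧸ φ.ker) := by
  refine fun x ↦ QuotientGroup.induction_on x fun g ↦ ?_
  obtain ⟨k, hk⟩ := h g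
  exact ⟨k, by rw [← QuotientGroup.mk_pow, QuotientGroup.eq_one_iff, φ.mem_ker, map_pow, hk]⟩

theorem exists_ne_ne_of_three_le_card {α : Type*} [Fintype α] (h : 3 ≤ Fintype.card α) (a b : α) :
    ∃ c, c ≠ a ∧ c ≠ b := by
  classical
  by_contra! hab
  have : Finset.univ ⊆ {a, b} := fun c _ ↦
    Finset.mem_insert.2 ((em (c = a)).imp_right fun hc ↦ Finset.mem_singleton.2 (hab c hc))
  have := (Finset.card_le_card this).trans Finset.card_le_two
  rw [Finset.card_univ] at this
  omega

section RightOrdered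

variable {M : Type*} [Monoid M]

theorem Right.pow_lt_pow_right [Preorder M] [MulRightStrictMono M] {z : M} (hz : 1 < z)
    {m n : ℕ} (h : m < n) : z ^ m < z ^ n :=
  strictMono_nat_of_lt_succ (fun k ↦ by rw [pow_succ']; exact lt_mul_of_one_lt_left' _ hz) h

variable [Preorder M] [MulRightMono M] {x y z : M}

theorem Commute.mul_le_pow_add (hzy : Commute z y) {m k : ℕ} (hx : x ≤ z ^ m) (hy : y ≤ z ^ k) :
    x * y ≤ z ^ (m + k) :=
  calc x * y ≤ z ^ m * y := mul_le_mul_left hx y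
    _ = y * z ^ m := (hzy.pow_left m).eq
    _ ≤ z ^ k * z ^ m := mul_le_mul_left hy _
    _ = z ^ (m + k) := by rw [← pow_add, add_comm]

theorem Commute.pow_le_pow_of_le (hzx : Commute z x) (hx : x ≤ z) (n : ℕ) : x ^ n ≤ z ^ n := by
  induction n with
  | zero => simp
  | succ n ih => rw [pow_succ]; exact hzx.mul_le_pow_add ih (by rwa [pow_one])

end RightOrdered

section

variable {G : Type*} [Group G] [LinearOrder G] [MulRightMono G] {a b z : G}

theorem lt_max_mabs_of_commutatorElement_eq_pow (hz : 1 < z) (ha : Commute z a) (hb : Commute z b)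
    {c : ℕ} (hc : 0 < c) (h : ⁅a, b⁆ = z ^ c) : z < max |a|ₘ |b|ₘ := by
  by_contra! hle
  obtain ⟨⟨ha₁, ha₂⟩, ⟨hb₁, hb₂⟩⟩ := And.imp mabs_le'.1 mabs_le'.1 (max_le_iff.1 hle)
  -- any exponent `k` with `k ^ 2 > 4 * k` works in place of `5`
  have hx : a ^ 5 * b ^ 5 ≤ z ^ (5 + 5) :=
    (hb.pow_right 5).mul_le_pow_add (ha.pow_le_pow_of_le ha₁ 5) (hb.pow_le_pow_of_le hb₁ 5)
  have hy : a⁻¹ ^ 5 * b⁻¹ ^ 5 ≤ z ^ (5 + 5) :=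
    (hb.inv_right.pow_right 5).mul_le_pow_add (ha.inv_right.pow_le_pow_of_le ha₂ 5)
      (hb.inv_right.pow_le_pow_of_le hb₂ 5)
  have hxy : a ^ 5 * b ^ 5 * (a⁻¹ ^ 5 * b⁻¹ ^ 5) = z ^ (c * 25) := by
    have hcomm := commutatorElement_pow_pow (h ▸ ha.pow_left c) (h ▸ hb.pow_left c) 5 5
    rw [inv_pow, inv_pow, ← mul_assoc, ← commutatorElement_def, hcomm, h, ← pow_mul]
  have hzy : Commute z (a⁻¹ ^ 5 * b⁻¹ ^ 5) := (ha.inv_right.pow_right 5).mul_right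
    (hb.inv_right.pow_right 5)
  have hbound : z ^ (c * 25) ≤ z ^ (10 + 10) := hxy ▸ hzy.mul_le_pow_add hx hy
  exact hbound.not_gt (Right.pow_lt_pow_right hz (by omega))

theorem lt_max_mabs_of_commutatorElement_eq_zpow_of_one_lt (hz : 1 < z) (ha : Commute z a)
    (hb : Commute z b) {c : ℤ} (hc : c ≠ 0) (h : ⁅a, b⁆ = z ^ c) : z < max |a|ₘ |b|ₘ := by
  obtain ⟨k, rfl | rfl⟩ := c.eq_nat_or_neg
  · rw [zpow_natCast] at h
    exact lt_max_mabs_of_commutatorElement_eq_pow hz ha hb (by omega) h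
  · have h' : ⁅b, a⁆ = z ^ k := by rw [← commutatorElement_inv, h, zpow_neg, inv_inv, zpow_natCast]
    rw [max_comm]
    exact lt_max_mabs_of_commutatorElement_eq_pow hz hb ha (by omega) h'

theorem lt_max_mabs_of_commutatorElement_eq_zpow (hz : z ≠ 1) (ha : Commute z a)
    (hb : Commute z b) {c : ℤ} (hc : c ≠ 0) (h : ⁅a, b⁆ = z ^ c) : |z|ₘ < max |a|ₘ |b|ₘ := by
  have hpos : 1 < |z|ₘ := by
    rcases hz.lt_or_gt with hz | hz
    · exact (Right.one_lt_inv_iff.2 hz).trans_le (inv_le_mabs z)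
    · exact hz.trans_le (le_mabs_self z)
  rcases max_choice z z⁻¹ with hmax | hmax <;> change |z|ₘ = _ at hmax <;> rw [hmax] at hpos ⊢
  · exact lt_max_mabs_of_commutatorElement_eq_zpow_of_one_lt hpos ha hb hc h
  · exact lt_max_mabs_of_commutatorElement_eq_zpow_of_one_lt hpos ha.inv_left hb.inv_left
      (neg_ne_zero.2 hc) (by rw [inv_zpow', neg_neg, h])

end

theorem not_isRightOrderable_of_forall_commutatorElement_eq_zpow {G ι : Type*} [Group G] [Finite ι]
    [Nonempty ι] (f : ι → G) (hf : ∀ i, f i ≠ 1)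
    (hrel : ∀ i, ∃ j k, Commute (f i) (f j) ∧ Commute (f i) (f k) ∧
      ∃ c : ℤ, c ≠ 0 ∧ ⁅f j, f k⁆ = f i ^ c) :
    ¬ IsRightOrderable G := by
  rintro ⟨_, hmono⟩
  have : MulRightMono G := ⟨fun g _ _ h ↦ hmono g _ _ h⟩
  obtain ⟨i, hi⟩ := Finite.exists_max fun i ↦ |f i|ₘ
  obtain ⟨j, k, hj, hk, c, hc, h⟩ := hrel i
  exact (lt_max_mabs_of_commutatorElement_eq_zpow (hf i) hj hk hc h).not_ge
    (max_le (hi j) (hi k))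

namespace Matrix

variable {n R : Type*} [Fintype n] [DecidableEq n] [CommRing R] {i j k l : n}

theorem transvection_mul_transvection_of_ne (hjk : j ≠ k) (a b : R) :
    transvection i j a * transvection k l b = 1 + single i j a + single k l b := by
  simp [transvection, Matrix.add_mul, Matrix.mul_add, hjk, add_assoc]

theorem transvection_commute (hjk : j ≠ k) (hli : l ≠ i) (a b : R) :
    Commute (transvection i j a) (transvection k l b) := by
  rw [Commute, SemiconjBy, transvection_mul_transvection_of_ne hjk,
    transvection_mul_transvection_of_ne hli, add_right_comm]

theorem transvection_mul_transvection_eq (hjl : j ≠ l) (hil : i ≠ l) (a b : R) :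
    transvection i j a * transvection j l b =
      transvection i l (a * b) * (transvection j l b * transvection i j a) := by
  simp only [transvection, Matrix.mul_add, Matrix.add_mul, mul_one, one_mul,
    single_mul_single_same, single_mul_single_of_ne, ne_eq, hil.symm, hjl.symm,
    not_false_eq_true, add_zero]
  abel

def transvectionGL (hij : i ≠ j) (c : R) : GL n R :=
  ⟨transvection i j c, transvection i j (-c),
    by rw [transvection_mul_transvection_same _ _ hij, add_neg_cancel, transvection_zero],
    by rw [transvection_mul_transvection_same _ _ hij, neg_add_cancel, transvection_zero]⟩

@[simp]
theorem val_transvectionGL (hij : i ≠ j) (c : R) :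
    (transvectionGL hij c : Matrix n n R) = transvection i j c := rfl

theorem transvectionGL_mul (hij : i ≠ j) (c d : R) :
    transvectionGL hij c * transvectionGL hij d = transvectionGL hij (c + d) :=
  Units.ext (transvection_mul_transvection_same _ _ hij c d)

theorem transvectionGL_inv (hij : i ≠ j) (c : R) :
    (transvectionGL hij c)⁻¹ = transvectionGL hij (-c) :=
  Units.ext rfl

theorem transvectionGL_zpow (hij : i ≠ j) (c : R) (m : ℤ) :
    transvectionGL hij c ^ m = transvectionGL hij (m • c) := by
  induction m with
  | zero => ext1; simp
  | succ m ih => rw [_root_.zpow_add_one, ih, transvectionGL_mul, add_zsmul, one_zsmul]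
  | pred m ih =>
    rw [_root_.zpow_sub_one, ih, sub_zsmul, one_zsmul, transvectionGL_inv, transvectionGL_mul]

theorem transvectionGL_commute (hij : i ≠ j) (hkl : k ≠ l) (hjk : j ≠ k) (hli : l ≠ i) (a b : R) :
    Commute (transvectionGL hij a) (transvectionGL hkl b) :=
  Units.ext (transvection_commute hjk hli a b)

theorem commutatorElement_transvectionGL (hij : i ≠ j) (hjl : j ≠ l) (hil : i ≠ l) (a b : R) :
    ⁅transvectionGL hij a, transvectionGL hjl b⁆ = transvectionGL hil (a * b) := by
  have h : transvectionGL hij a * transvectionGL hjl b =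
      transvectionGL hil (a * b) * (transvectionGL hjl b * transvectionGL hij a) :=
    Units.ext (transvection_mul_transvection_eq hjl hil a b)
  rw [commutatorElement_def, h]
  group

theorem transvectionGL_ne_one [Nontrivial R] (hij : i ≠ j) {c : R} (hc : c ≠ 0) :
    transvectionGL hij c ≠ 1 := by
  intro h
  have := congr_arg (fun g : GL n R ↦ (g : Matrix n n R) i j) h
  simp [transvection, hij, hc] at this

end Matrix

theorem pow_pow_eq_one_of_natCast_dvd_sub_one {A : Type*} [Ring A] {p m : ℕ}
    (hp : (p : A) ^ (m + 1) = 0) {x : A} (hx : (p : A) ∣ x - 1) : x ^ p ^ m = 1 := by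
  obtain ⟨c, hc⟩ := hx
  -- `A` need not be commutative, so argue in `ℤ[X]` and evaluate at `c`
  obtain ⟨q, hq⟩ : (p : Polynomial ℤ) ^ (m + 1) ∣
      (1 + (p : Polynomial ℤ) * Polynomial.X) ^ p ^ m - 1 ^ p ^ m :=
    dvd_sub_pow_of_dvd_sub (by simp) m
  have := congr_arg (Polynomial.aeval c) hq
  simp only [map_sub, map_pow, map_add, map_mul, map_one, map_natCast, Polynomial.aeval_X, one_pow,
    hp, zero_mul] at this
  rwa [← hc, add_sub_cancel, sub_eq_zero] at this

open Matrix

-- `congruenceSubgroup p` is by definition `principalCongruenceSubgroup (Fin 3) p`.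
def principalCongruenceSubgroup (n : Type*) [Fintype n] [DecidableEq n] (N : ℕ) :
    Subgroup (GL n ℤ) :=
  (GeneralLinearGroup.map (Int.castRingHom (ZMod N))).ker

namespace principalCongruenceSubgroup

variable {n : Type*} [Fintype n] [DecidableEq n] {N p : ℕ}

theorem mem_iff {g : GL n ℤ} :
    g ∈ principalCongruenceSubgroup n N ↔
      ∀ a b, (N : ℤ) ∣ (g : Matrix n n ℤ) a b - (1 : Matrix n n ℤ) a b := by
  simp [principalCongruenceSubgroup, Units.ext_iff, ← Matrix.ext_iff,
    ← ZMod.intCast_zmod_eq_zero_iff_dvd, sub_eq_zero, Matrix.one_apply, apply_ite]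

theorem transvectionGL_mem {i j : n} (hij : i ≠ j) {c : ℤ} (hc : (N : ℤ) ∣ c) :
    transvectionGL hij c ∈ principalCongruenceSubgroup n N := by
  rw [mem_iff]
  intro a b
  simp only [val_transvectionGL, transvection, Matrix.add_apply, add_sub_cancel_left, single_apply]
  split_ifs
  exacts [hc, dvd_zero _]

theorem exists_notMem_pow_succ (hp : p ≠ 1) {g : GL n ℤ} (hg : g ≠ 1) :
    ∃ m, g ∉ principalCongruenceSubgroup n (p ^ (m + 1)) := by
  obtain ⟨a, b, hab⟩ : ∃ a b, (g : Matrix n n ℤ) a b - (1 : Matrix n n ℤ) a b ≠ 0 := by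
    by_contra! h
    exact hg (Units.ext (Matrix.ext fun a b ↦ sub_eq_zero.1 (h a b)))
  obtain ⟨m, hm⟩ : FiniteMultiplicity (p : ℤ) _ :=
    Int.finiteMultiplicity_iff.2 ⟨by simpa using hp, hab⟩
  exact ⟨m, fun hmem ↦ hm (by exact_mod_cast mem_iff.1 hmem a b)⟩

theorem map_pow_eq_one {g : GL n ℤ} (hg : g ∈ principalCongruenceSubgroup n p) (m : ℕ) :
    GeneralLinearGroup.map (Int.castRingHom (ZMod (p ^ (m + 1)))) g ^ p ^ m = 1 := by
  choose C hC using mem_iff.1 hg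
  ext1
  rw [Units.val_pow_eq_pow_val, Units.val_one]
  refine pow_pow_eq_one_of_natCast_dvd_sub_one ?_ ⟨of fun a b ↦ (C a b : ZMod (p ^ (m + 1))), ?_⟩
  · rw [← Nat.cast_pow, ← nsmul_one, ← Nat.cast_smul_eq_nsmul (ZMod (p ^ (m + 1))),
      ZMod.natCast_self, zero_smul]
  · ext a b
    rw [← nsmul_eq_mul, Matrix.sub_apply, GeneralLinearGroup.map_apply, Matrix.smul_apply, of_apply,
      nsmul_eq_mul]
    simpa [Matrix.one_apply, apply_ite] using congr_arg (Int.cast : ℤ → ZMod (p ^ (m + 1))) (hC a b)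

theorem isResiduallyFinitePGroup_of_le (hp : p.Prime) {H : Subgroup (GL n ℤ)}
    (hH : H ≤ principalCongruenceSubgroup n p) : IsResiduallyFinitePGroup p H := by
  intro g hg
  obtain ⟨m, hm⟩ := exists_notMem_pow_succ hp.ne_one fun h ↦ hg (Subtype.ext h)
  have : NeZero (p ^ (m + 1)) := ⟨pow_ne_zero _ hp.ne_zero⟩
  let φ := (GeneralLinearGroup.map (Int.castRingHom (ZMod (p ^ (m + 1))))).comp H.subtype
  exact ⟨φ.ker, φ.normal_ker, hm, inferInstance,
    isPGroup_quotient_ker φ fun x ↦ ⟨m, map_pow_eq_one (hH x.2) m⟩⟩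

end principalCongruenceSubgroup

theorem not_isRightOrderable_of_transvectionGL_mem {n : Type*} [Fintype n] [DecidableEq n]
    (hn : 3 ≤ Fintype.card n) {H : Subgroup (GL n ℤ)} {t : ℤ} (ht : t ≠ 0)
    (hH : ∀ (i j : n) (hij : i ≠ j), transvectionGL hij t ∈ H) : ¬ IsRightOrderable H := by
  have : Nonempty {x : n × n // x.1 ≠ x.2} := by
    obtain ⟨i⟩ := Fintype.card_pos_iff.1 (by omega : 0 < Fintype.card n)
    obtain ⟨j, hj, -⟩ := exists_ne_ne_of_three_le_card hn i i
    exact ⟨⟨(i, j), hj.symm⟩⟩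
  refine not_isRightOrderable_of_forall_commutatorElement_eq_zpow
    (fun x : {x : n × n // x.1 ≠ x.2} ↦ (⟨transvectionGL x.2 t, hH _ _ x.2⟩ : H))
    (fun x h ↦ transvectionGL_ne_one x.2 ht (congr_arg Subtype.val h)) ?_
  rintro ⟨⟨i, l⟩, hil⟩
  obtain ⟨j, hji, hjl⟩ := exists_ne_ne_of_three_le_card hn i l
  refine ⟨⟨(i, j), hji.symm⟩, ⟨(j, l), hjl⟩, Subtype.ext ?_, Subtype.ext ?_, t, ht, Subtype.ext ?_⟩
  · exact transvectionGL_commute hil hji.symm hil.symm hji t t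
  · exact transvectionGL_commute hil hjl hjl.symm hil.symm t t
  · change H.subtype ⁅(_ : H), _⁆ = _
    rw [map_commutatorElement, H.coe_subtype, SubgroupClass.coe_zpow, transvectionGL_zpow,
      commutatorElement_transvectionGL hji.symm hjl hil, smul_eq_mul]

/-- Let `P` be a finite set of primes and `G = ⋂_{p ∈ P} G_p` the intersection of
the principal congruence subgroups of level `p` in `GL₃(ℤ)`.  Then `G` is a
residually finite `p`-group for every `p ∈ P`, and `G` is not right orderable. -/
theorem stmt_3 (P : Finset ℕ) (hP : ∀ p ∈ P, p.Prime) :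
    (∀ p ∈ P, IsResiduallyFinitePGroup p ↥(⨅ q ∈ P, congruenceSubgroup q)) ∧
      ¬ IsRightOrderable ↥(⨅ q ∈ P, congruenceSubgroup q) := by
  refine ⟨fun p hp ↦ principalCongruenceSubgroup.isResiduallyFinitePGroup_of_le (hP p hp)
    (iInf₂_le p hp), not_isRightOrderable_of_transvectionGL_mem (by simp)
    (Finset.prod_ne_zero_iff.2 fun q hq ↦ Int.natCast_ne_zero.2 (hP q hq).ne_zero) ?_⟩
  intro i j hij
  simp only [Subgroup.mem_iInf]
  exact fun q hq ↦ principalCongruenceSubgroup.transvectionGL_mem hij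
    (Finset.dvd_prod_of_mem (fun q : ℕ ↦ (q : ℤ)) hq)
end

section
/- Let p and q be distinct primes and let G be a solvable-by-finite group (i.e. G has a solvable normal subgroup of finite index). If G is both a residually finite p-group and a residually finite q-group, then G has a finite series 1 = G₀ ⊴ G₁ ⊴ ⋯ ⊴ Gₙ = G in which each Gᵢ is normal in G and each quotient G_{i+1}/G_i is torsion-free abelian. -/
/-!
Residual `p`-finiteness makes `G` solvable: a finite `p`-quotient of `G` is an extension of an
image of the solvable subgroup `H` by a `p`-group of order at most `[G : H]`, so the derived lengths
of all these quotients are bounded, and `G⁽ᵐ⁾ = 1` for one `m`.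

Call a normal subgroup bi-closed if it is closed in both the pro-`p` and the pro-`q` topology of
`G`, and let `c S` be the smallest bi-closed subgroup containing `S`. The series is
`c G⁽ᵐ⁾ ≤ ⋯ ≤ c G⁽⁰⁾`; it starts at `1` because `1` is bi-closed by the two residual hypotheses.
Centralizers modulo a bi-closed subgroup are bi-closed, which gives `⁅c S, c S⁆ ≤ c ⁅S, S⁆`, so the
factors are abelian. A bi-closed `T` is isolated: if `x ^ (p ^ e * m) ∈ T` with `p ∤ m`, then
`x ^ p ^ e ∈ T` by pro-`p` closedness, and `x ∈ T` by pro-`q` closedness.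
-/

open scoped commutatorElement

section

variable {G : Type*} [Group G]

theorem Subgroup.mem_of_pow_mem_of_coprime {T : Subgroup G} {x : G} {a b : ℕ} (hab : a.Coprime b)
    (ha : x ^ a ∈ T) (hb : x ^ b ∈ T) : x ∈ T := by
  obtain ⟨u, v, huv⟩ := Nat.isCoprime_iff_coprime.2 hab
  have hx : x = (x ^ a) ^ u * (x ^ b) ^ v := by
    rw [← zpow_natCast, ← zpow_natCast, ← zpow_mul, ← zpow_mul, ← zpow_add, mul_comm (a : ℤ),
      mul_comm (b : ℤ), huv, zpow_one]
  rw [hx]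
  exact mul_mem (zpow_mem ha u) (zpow_mem hb v)

theorem derivedSeries_le_iff_quotient_eq_bot (N : Subgroup G) [N.Normal] (n : ℕ) :
    derivedSeries G n ≤ N ↔ derivedSeries (G ⧸ N) n = ⊥ := by
  rw [← map_derivedSeries_eq (QuotientGroup.mk'_surjective N), Subgroup.map_eq_bot_iff,
    QuotientGroup.ker_mk']

theorem derivedSeries_add_le_map_subtype {L : Subgroup G} {a : ℕ} (h : derivedSeries G a ≤ L)
    (b : ℕ) : derivedSeries G (a + b) ≤ (derivedSeries L b).map L.subtype := by
  induction b with
  | zero => simpa [← MonoidHom.range_eq_map] using h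
  | succ b ih =>
    rw [← add_assoc, derivedSeries_succ, derivedSeries_succ, Subgroup.map_commutator]
    exact Subgroup.commutator_mono ih ih

theorem derivedSeries_add_eq_bot {L : Subgroup G} [L.Normal] {a b : ℕ}
    (ha : derivedSeries (G ⧸ L) a = ⊥) (hb : derivedSeries L b = ⊥) :
    derivedSeries G (a + b) = ⊥ := by
  have h := derivedSeries_add_le_map_subtype ((derivedSeries_le_iff_quotient_eq_bot L a).2 ha) b
  rwa [hb, Subgroup.map_bot, le_bot_iff] at h

theorem derivedSeries_eq_bot_of_card_le [Finite G] [Group.IsSolvable G] {n : ℕ}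
    (hn : Nat.card G ≤ n) : derivedSeries G n = ⊥ := by
  -- the derived series strictly decreases until it reaches `⊥`
  have key : ∀ k, derivedSeries G k = ⊥ ∨ k + Nat.card (derivedSeries G k) ≤ Nat.card G := by
    intro k
    induction k with
    | zero => simp
    | succ k ih =>
      by_cases hbot : derivedSeries G k = ⊥
      · simp [derivedSeries_succ, hbot]
      · have hlt : derivedSeries G (k + 1) < derivedSeries G k := by
          rw [derivedSeries_succ]
          exact Group.IsSolvable.commutator_lt_of_ne_bot hbot
        have hcard : Nat.card (derivedSeries G (k + 1)) < Nat.card (derivedSeries G k) := by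
          have := Set.ncard_lt_ncard (SetLike.coe_ssubset_coe.2 hlt) (Set.toFinite _)
          rwa [← Nat.card_coe_set_eq, ← Nat.card_coe_set_eq] at this
        have := ih.resolve_left hbot
        right
        omega
  refine le_bot_iff.1 (le_trans (derivedSeries_antitone G hn) ?_)
  rcases key (Nat.card G) with h | h
  · exact h.le
  · have := Nat.card_pos (α := derivedSeries G (Nat.card G))
    omega

namespace Subgroup

def HasFinitePQuotient (r : ℕ) (N : Subgroup G) : Prop :=
  ∃ hN : N.Normal, (letI := hN; Finite (G ⧸ N) ∧ IsPGroup r (G ⧸ N))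

theorem HasFinitePQuotient.of_le {r : ℕ} {N M : Subgroup G} (hN : N.HasFinitePQuotient r)
    (hNM : N ≤ M) [M.Normal] : M.HasFinitePQuotient r := by
  obtain ⟨_, _, hpg⟩ := hN
  have hsurj := QuotientGroup.map_surjective_of_surjective N M (MonoidHom.id G)
    QuotientGroup.mk_surjective hNM
  exact ⟨inferInstance, Finite.of_surjective _ hsurj, hpg.of_surjective _ hsurj⟩

theorem derivedSeries_le_of_hasFinitePQuotient {p : ℕ} (hp : p.Prime) {N : Subgroup G}
    (hN : N.HasFinitePQuotient p) (H : Subgroup G) [H.Normal] [H.FiniteIndex] {d : ℕ}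
    (hd : derivedSeries H d = ⊥) : derivedSeries G (H.index + d) ≤ N := by
  obtain ⟨_, _, hpg⟩ := hN
  have : Fact p.Prime := ⟨hp⟩
  set L := H.map (QuotientGroup.mk' N)
  have hL : derivedSeries L d = ⊥ := by
    rw [← map_derivedSeries_eq ((QuotientGroup.mk' N).subgroupMap_surjective H), hd, map_bot]
  have hsurj := QuotientGroup.map_surjective_of_surjective H L (QuotientGroup.mk' N)
    (QuotientGroup.mk_surjective.comp (QuotientGroup.mk'_surjective N)) (le_comap_map _ H)
  have := (hpg.to_quotient L).isNilpotent
  rw [derivedSeries_le_iff_quotient_eq_bot]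
  exact derivedSeries_add_eq_bot
    (derivedSeries_eq_bot_of_card_le (Nat.card_le_card_of_surjective _ hsurj)) hL

end Subgroup

theorem IsResiduallyFinitePGroup.isSolvable {p : ℕ}
    (hG : IsResiduallyFinitePGroup p G) (hp : p.Prime) (H : Subgroup G)
    [H.Normal] [H.FiniteIndex] [Group.IsSolvable H] : Group.IsSolvable G := by
  obtain ⟨d, hd⟩ := Group.IsSolvable.solvable (G := H)
  refine ⟨H.index + d, eq_bot_iff.2 fun x hx => ?_⟩
  by_contra hx1
  obtain ⟨N, hN, hxN, hquot⟩ := hG x hx1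
  exact hxN (Subgroup.derivedSeries_le_of_hasFinitePQuotient hp ⟨hN, hquot⟩ H hd hx)

namespace Subgroup

def centralizerModulo (S T : Subgroup G) [T.Normal] : Subgroup G :=
  (centralizer (S.map (QuotientGroup.mk' T))).comap (QuotientGroup.mk' T)

section CentralizerModulo

variable {S T : Subgroup G} [T.Normal]

theorem mem_centralizerModulo {x : G} : x ∈ centralizerModulo S T ↔ ∀ s ∈ S, ⁅x, s⁆ ∈ T := by
  simp only [centralizerModulo, mem_comap, mem_centralizer_iff, coe_map, Set.forall_mem_image,
    ← QuotientGroup.eq_one_iff, QuotientGroup.mk'_apply]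
  refine forall₂_congr fun s _ => ?_
  rw [← QuotientGroup.mk'_apply, ← QuotientGroup.mk'_apply, ← QuotientGroup.mk'_apply,
    map_commutatorElement, commutatorElement_eq_one_iff_mul_comm, eq_comm]

theorem le_centralizerModulo_iff {A : Subgroup G} : A ≤ centralizerModulo S T ↔ ⁅A, S⁆ ≤ T := by
  rw [commutator_le, SetLike.le_def]
  simp only [mem_centralizerModulo]

theorem le_centralizerModulo_self : T ≤ centralizerModulo S T :=
  le_centralizerModulo_iff.2 (commutator_le_left T S)

theorem centralizerModulo_mono {N : Subgroup G} [N.Normal] (hTN : T ≤ N) :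
    centralizerModulo S T ≤ centralizerModulo S N := fun _ hx =>
  mem_centralizerModulo.2 fun s hs => hTN (mem_centralizerModulo.1 hx s hs)

instance [S.Normal] : (centralizerModulo S T).Normal := by
  unfold centralizerModulo
  infer_instance

end CentralizerModulo

def IsProPClosed (r : ℕ) (T : Subgroup G) : Prop :=
  ∀ x ∉ T, ∃ N : Subgroup G, N.HasFinitePQuotient r ∧ T ≤ N ∧ x ∉ N

section IsProPClosed

variable {r : ℕ}

theorem isProPClosed_sInf {s : Set (Subgroup G)} (hs : ∀ T ∈ s, T.IsProPClosed r) :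
    (sInf s).IsProPClosed r := by
  intro x hx
  obtain ⟨T, hT, hxT⟩ : ∃ T ∈ s, x ∉ T := by simpa [mem_sInf] using hx
  obtain ⟨N, hN, hTN, hxN⟩ := hs T hT x hxT
  exact ⟨N, hN, (sInf_le hT).trans hTN, hxN⟩

theorem IsProPClosed.centralizerModulo {S T : Subgroup G} [S.Normal] [T.Normal]
    (hT : T.IsProPClosed r) : (centralizerModulo S T).IsProPClosed r := by
  intro x hx
  obtain ⟨s, hs, hxs⟩ : ∃ s ∈ S, ⁅x, s⁆ ∉ T := by simpa [mem_centralizerModulo] using hx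
  obtain ⟨N, hN, hTN, hxsN⟩ := hT _ hxs
  have := hN.1
  exact ⟨Subgroup.centralizerModulo S N, hN.of_le le_centralizerModulo_self,
    centralizerModulo_mono hTN, fun hxN => hxsN (mem_centralizerModulo.1 hxN s hs)⟩

/-- Modulo a finite `r`-quotient, `x` has `r`-power order, which is coprime to `n`. -/
theorem IsProPClosed.mem_of_pow_mem {T : Subgroup G} (hT : T.IsProPClosed r) {x : G} {n : ℕ}
    (hn : n.Coprime r) (hx : x ^ n ∈ T) : x ∈ T := by
  by_contra hxT
  obtain ⟨N, ⟨_, _, hpg⟩, hTN, hxN⟩ := hT x hxT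
  obtain ⟨k, hk⟩ := hpg (x : G ⧸ N)
  rw [← QuotientGroup.mk_pow, QuotientGroup.eq_one_iff] at hk
  exact hxN (mem_of_pow_mem_of_coprime (hn.pow_right k) (hTN hx) hk)

end IsProPClosed

end Subgroup

theorem IsResiduallyFinitePGroup.isProPClosed_bot {p : ℕ}
    (hG : IsResiduallyFinitePGroup p G) : (⊥ : Subgroup G).IsProPClosed p := by
  intro x hx
  obtain ⟨N, hN, hxN, hquot⟩ := hG x hx
  exact ⟨N, ⟨hN, hquot⟩, bot_le, hxN⟩

namespace Subgroup

variable {p q : ℕ}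

structure IsBiClosed (p q : ℕ) (T : Subgroup G) : Prop where
  normal : T.Normal
  isProPClosed_left : T.IsProPClosed p
  isProPClosed_right : T.IsProPClosed q

theorem isBiClosed_sInf {s : Set (Subgroup G)} (hs : ∀ T ∈ s, T.IsBiClosed p q) :
    (sInf s).IsBiClosed p q := by
  refine ⟨⟨fun x hx g => ?_⟩, isProPClosed_sInf fun T hT => (hs T hT).isProPClosed_left,
    isProPClosed_sInf fun T hT => (hs T hT).isProPClosed_right⟩
  rw [mem_sInf] at hx ⊢
  exact fun T hT => (hs T hT).normal.conj_mem x (hx T hT) g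

theorem IsBiClosed.mem_of_pow_mem (hp : p.Prime) (hq : q.Prime) (hpq : p ≠ q)
    {T : Subgroup G} (hT : T.IsBiClosed p q) {x : G} {n : ℕ} (hn : n ≠ 0) (hx : x ^ n ∈ T) :
    x ∈ T := by
  obtain ⟨e, m, hpm, rfl⟩ := Nat.exists_eq_pow_mul_and_not_dvd hn p hp.ne_one
  rw [pow_mul] at hx
  have hxe : x ^ p ^ e ∈ T :=
    hT.isProPClosed_left.mem_of_pow_mem (hp.coprime_iff_not_dvd.2 hpm).symm hx
  exact hT.isProPClosed_right.mem_of_pow_mem (((Nat.coprime_primes hp hq).2 hpq).pow_left e) hxe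

variable (p q) in
def biClosure : ClosureOperator (Subgroup G) :=
  .ofCompletePred (IsBiClosed p q) fun _ => isBiClosed_sInf

theorem isBiClosed_biClosure (S : Subgroup G) : (biClosure p q S).IsBiClosed p q :=
  (biClosure p q).isClosed_closure S

instance (S : Subgroup G) : (biClosure p q S).Normal :=
  (isBiClosed_biClosure S).normal

theorem biClosure_eq_bot (hp : IsResiduallyFinitePGroup p G) (hq : IsResiduallyFinitePGroup q G) :
    biClosure p q (⊥ : Subgroup G) = ⊥ :=
  ClosureOperator.IsClosed.closure_eq (c := biClosure p q)
    ⟨normal_bot, hp.isProPClosed_bot, hq.isProPClosed_bot⟩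

/-- Minimality of the closure, applied to the bi-closed centralizers modulo `T` of `S` and then of
`biClosure p q S`. -/
theorem commutator_biClosure_le {S T : Subgroup G} [S.Normal] (hT : T.IsBiClosed p q)
    (hST : ⁅S, S⁆ ≤ T) : ⁅biClosure p q S, biClosure p q S⁆ ≤ T := by
  have := hT.normal
  have hbic {A : Subgroup G} [A.Normal] : (centralizerModulo A T).IsBiClosed p q :=
    ⟨inferInstance, hT.isProPClosed_left.centralizerModulo,
      hT.isProPClosed_right.centralizerModulo⟩
  have h1 : ⁅biClosure p q S, S⁆ ≤ T :=
    le_centralizerModulo_iff.1 ((biClosure p q).closure_min (le_centralizerModulo_iff.2 hST) hbic)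
  rw [commutator_comm] at h1
  rw [← le_centralizerModulo_iff]
  exact (biClosure p q).closure_min (le_centralizerModulo_iff.2 h1) hbic

end Subgroup

end

/-- Let `p ≠ q` be primes and `G` a solvable-by-finite group.  If `G` is a
residually finite `p`-group and a residually finite `q`-group, then `G` has a
finite series `1 = G₀ ⊴ G₁ ⊴ ⋯ ⊴ Gₙ = G` with each `Gᵢ` normal in `G` and each
quotient `G_{i+1}/G_i` torsion-free abelian (expressed elementwise: commutators
of elements of `G_{i+1}` lie in `Gᵢ`, and if a positive power of an element of
`G_{i+1}` lies in `Gᵢ` then so does the element itself). -/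
theorem stmt_4 (p q : ℕ) (hp : p.Prime) (hq : q.Prime) (hpq : p ≠ q)
    (G : Type*) [Group G]
    (hsf : ∃ H : Subgroup G, H.Normal ∧ IsSolvable H ∧ H.FiniteIndex)
    (hrp : IsResiduallyFinitePGroup p G) (hrq : IsResiduallyFinitePGroup q G) :
    ∃ (n : ℕ) (c : Fin (n + 1) → Subgroup G),
      c 0 = ⊥ ∧ c (Fin.last n) = ⊤ ∧
      (∀ i : Fin (n + 1), (c i).Normal) ∧
      (∀ i : Fin n, c i.castSucc ≤ c i.succ) ∧
      (∀ i : Fin n, ∀ x y : G, x ∈ c i.succ → y ∈ c i.succ →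
        x * y * x⁻¹ * y⁻¹ ∈ c i.castSucc) ∧
      (∀ i : Fin n, ∀ x : G, x ∈ c i.succ → ∀ k : ℕ, k ≠ 0 →
        x ^ k ∈ c i.castSucc → x ∈ c i.castSucc) := by
  obtain ⟨H, _, hH, _⟩ := hsf
  have : Group.IsSolvable H := hH
  obtain ⟨m, hm⟩ := (hrp.isSolvable hp H).solvable
  -- `c i` is the bi-closure of `G⁽ᵐ⁻ⁱ⁾`; `Fin.rev` avoids truncated subtraction
  refine ⟨m, fun i => Subgroup.biClosure p q (derivedSeries G i.rev), ?_, ?_,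
    fun _ => inferInstance, fun i => ?_, fun i x y hx hy => ?_, fun i x _ k hk hx => ?_⟩
  · simpa [hm] using Subgroup.biClosure_eq_bot hrp hrq
  · simp
  · simp only [Fin.rev_castSucc, Fin.rev_succ, Fin.val_succ, Fin.val_castSucc]
    exact (Subgroup.biClosure p q).monotone (derivedSeries_antitone G (Nat.le_succ _))
  · simp only [Fin.rev_castSucc, Fin.rev_succ, Fin.val_succ, Fin.val_castSucc] at hx hy ⊢
    have hcomm := Subgroup.commutator_biClosure_le (S := derivedSeries G i.rev)
      (Subgroup.isBiClosed_biClosure _)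
      ((derivedSeries_succ G _).symm.trans_le ((Subgroup.biClosure p q).le_closure _))
    exact commutatorElement_def x y ▸ hcomm (Subgroup.commutator_mem_commutator hx hy)
  · exact (Subgroup.isBiClosed_biClosure _).mem_of_pow_mem hp hq hpq hk hx
end

section
/- Let p be a prime, let G be a group that is a residually finite p-group, and let A be a maximal normal abelian subgroup of G (i.e. A is a normal abelian subgroup of G and A is not properly contained in any normal abelian subgroup of G). Then the quotient group G/A is a residually finite p-group. -/
/-- The centralizer of a normal subgroup is normal. -/
lemma centralizer_normal_of_normal {G : Type*} [Group G] (H : Subgroup G) (hH : H.Normal) :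
    (Subgroup.centralizer (H : Set G)).Normal := by
  constructor
  intro n hn g
  rw [Subgroup.mem_centralizer_iff] at hn ⊢
  intro h hh
  have hmem : g⁻¹ * h * g ∈ H := by
    have := hH.conj_mem h hh g⁻¹
    simpa using this
  have hyp := hn (g⁻¹ * h * g) hmem
  calc h * (g * n * g⁻¹) = g * ((g⁻¹ * h * g) * n) * g⁻¹ := by group
    _ = g * (n * (g⁻¹ * h * g)) * g⁻¹ := by rw [hyp]
    _ = (g * n * g⁻¹) * h := by group

/-- Let `p` be a prime, `G` a residually finite `p`-group, and `A` a maximal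
normal abelian subgroup of `G`.  Then `G/A` is a residually finite `p`-group. -/
theorem stmt_7 (p : ℕ) (hp : p.Prime) (G : Type*) [Group G]
    (hG : IsResiduallyFinitePGroup p G)
    (A : Subgroup G) [A.Normal]
    (hab : ∀ x y : G, x ∈ A → y ∈ A → x * y = y * x)
    (hmax : ∀ B : Subgroup G, B.Normal → (∀ x y : G, x ∈ B → y ∈ B → x * y = y * x) →
      A ≤ B → B = A) :
    IsResiduallyFinitePGroup p (G ⧸ A) := by
  intro gbar hgbar
  obtain ⟨g, rfl⟩ := QuotientGroup.mk_surjective gbar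
  have hgA : g ∉ A := fun h => hgbar ((QuotientGroup.eq_one_iff g).mpr h)
  -- the auxiliary normal subgroup H = C_G(A) ⊓ (A ⊔ ⟨g⟩^G)
  set C : Subgroup G := Subgroup.centralizer (A : Set G) with hC
  set H : Subgroup G := C ⊓ (A ⊔ Subgroup.normalClosure {g}) with hHdef
  haveI hCn : C.Normal := centralizer_normal_of_normal A inferInstance
  haveI hHn : H.Normal := Subgroup.normal_inf_normal _ _
  have hAC : A ≤ C := fun a ha => Subgroup.mem_centralizer_iff.mpr fun b hb => hab b a hb ha
  have hAH : A ≤ H := le_inf hAC le_sup_left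
  -- every element of H commutes with every element of A
  have hHA : ∀ x ∈ H, ∀ a ∈ A, x * a = a * x := by
    intro x hx a ha
    exact (Subgroup.mem_centralizer_iff.mp hx.1 a ha).symm
  -- there is h ∈ H not commuting with g
  have hex : ∃ h ∈ H, g * h ≠ h * g := by
    by_contra hcon
    push_neg at hcon
    have hgcent : g ∈ Subgroup.centralizer (H : Set G) :=
      Subgroup.mem_centralizer_iff.mpr fun h hh => (hcon h hh).symm
    have hgH : g ∈ H := by
      refine ⟨?_, ?_⟩
      · exact fun a ha => hgcent a (hAH ha)
      · exact Subgroup.mem_sup_right (Subgroup.subset_normalClosure (Set.mem_singleton g))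
    -- B = Z(H) is a normal abelian subgroup containing A, so B = A
    set B : Subgroup G := Subgroup.centralizer (H : Set G) ⊓ H with hBdef
    haveI : (Subgroup.centralizer (H : Set G)).Normal := centralizer_normal_of_normal H hHn
    have hBn : B.Normal := Subgroup.normal_inf_normal _ _
    have hBab : ∀ x y : G, x ∈ B → y ∈ B → x * y = y * x := by
      intro x y hx hy
      exact (Subgroup.mem_centralizer_iff.mp hx.1 y hy.2).symm
    have hAB : A ≤ B := le_inf (fun a ha => Subgroup.mem_centralizer_iff.mpr
      fun h hh => (hHA h hh a ha)) hAH
    have hBA : B = A := hmax B hBn hBab hAB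
    exact hgA (hBA ▸ (⟨hgcent, hgH⟩ : g ∈ B))
  obtain ⟨h, hhH, hne⟩ := hex
  have htne : g * h * g⁻¹ * h⁻¹ ≠ 1 := by
    intro heq
    apply hne
    have : g * h = h * g := by
      have := congrArg (fun z => z * h * g) heq
      simpa [mul_assoc] using this
    exact this
  obtain ⟨N, hNn, htN, hfin, hpN⟩ := hG (g * h * g⁻¹ * h⁻¹) htne
  haveI := hNn
  set φ : G →* G ⧸ N := QuotientGroup.mk' N with hφ
  set M : Subgroup G :=
    (Subgroup.centralizer ((H.map φ : Subgroup (G ⧸ N)) : Set (G ⧸ N))).comap φ with hMdef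
  have hMmem : ∀ x : G, x ∈ M ↔ ∀ h' ∈ H, φ h' * φ x = φ x * φ h' := by
    intro x
    constructor
    · intro hx h' hh'
      exact Subgroup.mem_centralizer_iff.mp hx (φ h') ⟨h', hh', rfl⟩
    · intro hx
      refine Subgroup.mem_centralizer_iff.mpr ?_
      rintro _ ⟨h', hh', rfl⟩
      exact hx h' hh'
  have hNM : N ≤ M := by
    intro n hn
    rw [hMmem]
    intro h' hh'
    have : φ n = 1 := (QuotientGroup.eq_one_iff n).mpr hn
    rw [this, mul_one, one_mul]
  have hAM : A ≤ M := by
    intro a ha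
    rw [hMmem]
    intro h' hh'
    rw [← map_mul, ← map_mul, hHA h' hh' a ha]
  have hgM : g ∉ M := by
    intro hg
    have hcomm := (hMmem g).mp hg h hhH
    apply htN
    rw [← QuotientGroup.eq_one_iff (g * h * g⁻¹ * h⁻¹)]
    show φ (g * h * g⁻¹ * h⁻¹) = 1
    have : φ g * φ h = φ h * φ g := hcomm.symm
    calc φ (g * h * g⁻¹ * h⁻¹) = φ g * φ h * (φ g)⁻¹ * (φ h)⁻¹ := by
          simp [map_mul]
      _ = φ h * φ g * (φ g)⁻¹ * (φ h)⁻¹ := by rw [this]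
      _ = 1 := by group
  have hMn : M.Normal := by
    constructor
    intro x hx gg
    rw [hMmem] at hx ⊢
    intro h' hh'
    have hmem : gg⁻¹ * h' * gg ∈ H := by
      have := hHn.conj_mem h' hh' gg⁻¹
      simpa using this
    have hyp := hx (gg⁻¹ * h' * gg) hmem
    have hyp' : (φ gg)⁻¹ * φ h' * φ gg * φ x = φ x * ((φ gg)⁻¹ * φ h' * φ gg) := by
      simpa [map_mul, map_inv, mul_assoc] using hyp
    have hφconj : φ (gg * x * gg⁻¹) = φ gg * φ x * (φ gg)⁻¹ := by simp [map_mul]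
    rw [hφconj]
    calc φ h' * (φ gg * φ x * (φ gg)⁻¹)
        = φ gg * ((φ gg)⁻¹ * φ h' * φ gg * φ x) * (φ gg)⁻¹ := by group
      _ = φ gg * (φ x * ((φ gg)⁻¹ * φ h' * φ gg)) * (φ gg)⁻¹ := by rw [hyp']
      _ = φ gg * φ x * (φ gg)⁻¹ * φ h' := by group
  haveI := hMn
  haveI : Finite (G ⧸ N) := hfin
  -- G / M is a finite p-group
  have e1 : ((G ⧸ N) ⧸ (M.map φ)) ≃* (G ⧸ M) :=
    QuotientGroup.quotientQuotientEquivQuotient N M hNM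
  have hfinM : Finite (G ⧸ M) := Finite.of_equiv _ e1.toEquiv
  have hpM : IsPGroup p (G ⧸ M) := (hpN.to_quotient (M.map φ)).of_equiv e1
  -- push M down to G / A
  refine ⟨M.map (QuotientGroup.mk' A), hMn.map _ (QuotientGroup.mk'_surjective A), ?_, ?_⟩
  · rintro ⟨m, hm, heq⟩
    apply hgM
    have : m⁻¹ * g ∈ A := QuotientGroup.eq.mp heq
    have : g = m * (m⁻¹ * g) := by group
    rw [this]
    exact M.mul_mem hm (hAM ‹m⁻¹ * g ∈ A›)
  · have e2 : ((G ⧸ A) ⧸ (M.map (QuotientGroup.mk' A))) ≃* (G ⧸ M) :=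
      QuotientGroup.quotientQuotientEquivQuotient A M hAM
    exact ⟨Finite.of_equiv _ e2.symm.toEquiv, hpM.of_equiv e2.symm⟩
end
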